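/- Let p(x,y,t) be a nonzero homogeneous real polynomial that vanishes on the plane x + y + t = 0, whose monomials have no common monomial factor, and which has exactly 4 distinct monomials. Then, up to a permutation of the variables x, y, t and multiplication by a nonzero real constant, p is one of: x³ + y³ + t³ − 3xyt, x² + y² + 2xy − t², or x² + xy − yt − t². -/

import Mathlib

/-!
Substituting `(x, y, t) = (X, 1, -(X + 1))` sends a monomial `x ^ a * y ^ b * t ^ c` of `p` to
`± X ^ a * (X + 1) ^ c`, whose coefficients are nonzero exactly in the degrees `[a, a + c]`, so the
vanishing of `p` on the plane becomes a vanishing combination of such polynomials. In it no degree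
is covered by exactly one interval, and a degree covered by none splits the combination into two
vanishing ones with at least three terms each. With four monomials every degree `0, …, d` is
therefore covered twice, so `∑ (c + 1) ≥ 2 * d + 2`; adding this bound for the three variables and
comparing with `∑ (a + b + c + 3) = 4 * (d + 3)` gives `d ≤ 3`.

For `d = 2` the vanishing means `p = (x + y + t) * (α * x + β * y + γ * t)`, and exactly two of
`α, β, γ, α + β, α + γ, β + γ` vanish. For `d = 3` the bounds are sharp, so every variable has
total exponent `4` over the four monomials; together with the two monomials free of `x` and the two
free of `y`, this forces `t ^ 3`, and by symmetry every cube, into the support, and then the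
fourth monomial is `x * y * t`.
-/

open Finset MvPolynomial

namespace Polynomial

variable {R : Type*} [CommRing R] [CharZero R] {ι : Type*} {S : Finset ι} {μ : ι → R}
  {a c : ι → ℕ}

theorem coeff_X_pow_mul_X_add_one_pow_ne_zero_iff {a c n : ℕ} :
    (X ^ a * (X + 1) ^ c : R[X]).coeff n ≠ 0 ↔ a ≤ n ∧ n ≤ a + c := by
  rw [coeff_X_pow_mul', coeff_X_add_one_pow]
  split_ifs with h
  · rw [Nat.cast_ne_zero, Ne, Nat.choose_eq_zero_iff]
    omega
  · simp only [ne_eq, not_true_eq_false, false_iff]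
    omega

theorem coeff_sum_eq_zero_of_forall_not_covers (n : ℕ)
    (h : ∀ i ∈ S, ¬ (a i ≤ n ∧ n ≤ a i + c i)) :
    (∑ i ∈ S, C (μ i) * (X ^ a i * (X + 1) ^ c i)).coeff n = 0 := by
  rw [finsetSum_coeff]
  refine sum_eq_zero fun i hi => ?_
  rw [coeff_C_mul, not_not.mp (mt coeff_X_pow_mul_X_add_one_pow_ne_zero_iff.mp (h i hi)),
    mul_zero]

theorem exists_ne_covers_of_sum_eq_zero [NoZeroDivisors R] (hμ : ∀ i ∈ S, μ i ≠ 0)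
    (hsum : ∑ i ∈ S, C (μ i) * (X ^ a i * (X + 1) ^ c i) = 0) {i : ι} (hi : i ∈ S) {n : ℕ}
    (hn : a i ≤ n ∧ n ≤ a i + c i) : ∃ j ∈ S, j ≠ i ∧ a j ≤ n ∧ n ≤ a j + c j := by
  by_contra! hne
  have hcoeff := congrArg (coeff · n) hsum
  simp only [finsetSum_coeff, coeff_C_mul, coeff_zero] at hcoeff
  rw [sum_eq_single i (fun j hj hji => ?_) (absurd hi)] at hcoeff
  · exact mul_ne_zero (hμ i hi) (coeff_X_pow_mul_X_add_one_pow_ne_zero_iff.mpr hn) hcoeff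
  · rw [not_not.mp (mt coeff_X_pow_mul_X_add_one_pow_ne_zero_iff.mp
      fun h' => (hne j hj hji h'.1).not_ge h'.2), mul_zero]

theorem three_le_card_of_sum_eq_zero [NoZeroDivisors R] (hμ : ∀ i ∈ S, μ i ≠ 0)
    (hinj : Set.InjOn (fun i => (a i, c i)) S)
    (hsum : ∑ i ∈ S, C (μ i) * (X ^ a i * (X + 1) ^ c i) = 0) (hS : S.Nonempty) :
    3 ≤ #S := by
  classical
  obtain ⟨i, hi⟩ := hS
  obtain ⟨j, hj, hji, -⟩ :=
    exists_ne_covers_of_sum_eq_zero hμ hsum hi ⟨le_rfl, Nat.le_add_right _ _⟩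
  by_contra! hcard
  have hcover : ∀ k ∈ S, ∀ l ∈ S, l ≠ k → ∀ n, a k ≤ n ∧ n ≤ a k + c k →
      a l ≤ n ∧ n ≤ a l + c l := by
    intro k hk l hl hlk n hn
    obtain ⟨l', hl', hl'k, hl'n⟩ := exists_ne_covers_of_sum_eq_zero hμ hsum hk hn
    have hle : #(S.erase k) ≤ 1 := by rw [card_erase_of_mem hk]; omega
    rwa [card_le_one.mp hle l (mem_erase.mpr ⟨hlk, hl⟩) l' (mem_erase.mpr ⟨hl'k, hl'⟩)]
  have h1 := hcover i hi j hj hji (a i) ⟨le_rfl, by omega⟩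
  have h2 := hcover j hj i hi hji.symm (a j) ⟨le_rfl, by omega⟩
  have h3 := hcover i hi j hj hji (a i + c i) ⟨by omega, le_rfl⟩
  have h4 := hcover j hj i hi hji.symm (a j + c j) ⟨by omega, le_rfl⟩
  exact hji (hinj hj hi (Prod.ext (by dsimp only; omega) (by dsimp only; omega)))

theorem two_le_card_covers_of_sum_eq_zero [NoZeroDivisors R] (hμ : ∀ i ∈ S, μ i ≠ 0)
    (hinj : Set.InjOn (fun i => (a i, c i)) S)
    (hsum : ∑ i ∈ S, C (μ i) * (X ^ a i * (X + 1) ^ c i) = 0) (hcard : #S ≤ 5) {n : ℕ}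
    (hlo : ∃ i ∈ S, a i ≤ n) (hhi : ∃ i ∈ S, n ≤ a i + c i) :
    2 ≤ #{i ∈ S | a i ≤ n ∧ n ≤ a i + c i} := by
  classical
  by_cases hcov : ∃ i ∈ S, a i ≤ n ∧ n ≤ a i + c i
  · obtain ⟨i, hi, hin⟩ := hcov
    obtain ⟨j, hj, hji, hjn⟩ := exists_ne_covers_of_sum_eq_zero hμ hsum hi hin
    exact one_lt_card.mpr ⟨i, mem_filter.mpr ⟨hi, hin⟩, j, mem_filter.mpr ⟨hj, hjn⟩, hji.symm⟩
  push Not at hcov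
  -- A gap at `n` splits the combination into two combinations that vanish separately.
  have hsplit := sum_filter_add_sum_filter_not S (fun i => a i + c i < n)
    (fun i => C (μ i) * (X ^ a i * (X + 1) ^ c i))
  have hcardLR := card_filter_add_card_filter_not (s := S) (fun i => a i + c i < n)
  set L := S.filter (fun i => a i + c i < n)
  set R := S.filter (fun i => ¬ a i + c i < n)
  have hR : ∀ i ∈ R, n < a i := fun i hi => by
    obtain ⟨hiS, hin⟩ := mem_filter.mp hi
    by_contra h
    exact hin (hcov i hiS (not_lt.mp h))
  have hsumL : ∑ i ∈ L, C (μ i) * (X ^ a i * (X + 1) ^ c i) = 0 := by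
    ext k
    rw [coeff_zero]
    rcases lt_or_ge k n with hk | hk
    · have hR0 : (∑ i ∈ R, C (μ i) * (X ^ a i * (X + 1) ^ c i)).coeff k = 0 :=
        coeff_sum_eq_zero_of_forall_not_covers k fun i hi h => by have := hR i hi; omega
      have := congrArg (coeff · k) hsum
      rwa [← hsplit, coeff_add, hR0, add_zero] at this
    · exact coeff_sum_eq_zero_of_forall_not_covers k fun i hi h => by
        have := (mem_filter.mp hi).2; omega
  have hsumR : ∑ i ∈ R, C (μ i) * (X ^ a i * (X + 1) ^ c i) = 0 := by
    rwa [← hsplit, hsumL, zero_add] at hsum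
  have hL3 : 3 ≤ #L := by
    refine three_le_card_of_sum_eq_zero (fun i hi => hμ i (mem_filter.mp hi).1)
      (hinj.mono (filter_subset _ _)) hsumL ?_
    obtain ⟨i, hi, hin⟩ := hlo
    exact ⟨i, mem_filter.mpr ⟨hi, by have := hcov i hi hin; omega⟩⟩
  have hR3 : 3 ≤ #R := by
    refine three_le_card_of_sum_eq_zero (fun i hi => hμ i (mem_filter.mp hi).1)
      (hinj.mono (filter_subset _ _)) hsumR ?_
    obtain ⟨i, hi, hin⟩ := hhi
    exact ⟨i, mem_filter.mpr ⟨hi, by omega⟩⟩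
  omega

end Polynomial

theorem sum_range_card_filter_covers {ι : Type*} {S : Finset ι} {a c : ι → ℕ} (d : ℕ)
    (hd : ∀ i ∈ S, a i + c i ≤ d) :
    ∑ n ∈ range (d + 1), #{i ∈ S | a i ≤ n ∧ n ≤ a i + c i} = ∑ i ∈ S, (c i + 1) := by
  simp only [card_filter]
  rw [sum_comm]
  refine sum_congr rfl fun i hi => ?_
  have hIcc :
      (range (d + 1)).filter (fun n => a i ≤ n ∧ n ≤ a i + c i) = Icc (a i) (a i + c i) := by
    ext n
    simp only [mem_filter, mem_range, mem_Icc]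
    have := hd i hi
    omega
  rw [← card_filter, hIcc, Nat.card_Icc]
  omega

theorem MvPolynomial.sum_support_rename_perm {σ R M : Type*} [CommSemiring R] [AddCommMonoid M]
    (e : Equiv.Perm σ) (p : MvPolynomial σ R) (f : (σ →₀ ℕ) → M) :
    ∑ m ∈ (rename e p).support, f m = ∑ m ∈ p.support, f (m.mapDomain e) := by
  classical
  rw [support_rename_of_injective e.injective,
    sum_image fun _ _ _ _ h => Finsupp.mapDomain_injective e.injective h]

theorem sum_support_C_mul_X_pow_mul_X_add_one_pow_eq_zero {p : MvPolynomial (Fin 3) ℝ}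
    (hp : ∀ x : Fin 3 → ℝ, ∑ i, x i = 0 → eval x p = 0) :
    ∑ m ∈ p.support, Polynomial.C (coeff m p * (-1) ^ m 2) *
      (Polynomial.X ^ m 0 * (Polynomial.X + 1) ^ m 2) = 0 := by
  set g : Fin 3 → Polynomial ℝ := ![Polynomial.X, 1, -(Polynomial.X + 1)]
  have hg : aeval g p = 0 := Polynomial.funext fun r => by
    have hgr : (fun i => (g i).eval r) = ![r, 1, -(r + 1)] := by
      funext i; fin_cases i <;> simp [g]
    rw [aeval_def, polynomial_eval_eval₂, hgr, Polynomial.eval_zero,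
      show (Polynomial.evalRingHom r).comp (algebraMap ℝ (Polynomial ℝ)) = RingHom.id ℝ from
        RingHom.ext fun _ => by simp]
    exact hp _ (by simp [Fin.sum_univ_three])
  rw [← hg, aeval_def, eval₂_eq']
  refine sum_congr rfl fun m _ => ?_
  simp only [g, Fin.prod_univ_three, Matrix.cons_val_zero, Matrix.cons_val_one,
    Matrix.cons_val_two, Matrix.head_cons, Matrix.tail_cons, one_pow, mul_one]
  rw [neg_pow (Polynomial.X + 1 : Polynomial ℝ), Polynomial.algebraMap_eq, map_mul, map_pow,
    map_neg, map_one]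
  ring

noncomputable def multiIdx (a b c : ℕ) : Fin 3 →₀ ℕ := Finsupp.equivFunOnFinite.symm ![a, b, c]

section multiIdx

variable {a b c a' b' c' : ℕ}

@[simp] theorem multiIdx_apply_zero : multiIdx a b c 0 = a := rfl
@[simp] theorem multiIdx_apply_one : multiIdx a b c 1 = b := rfl
@[simp] theorem multiIdx_apply_two : multiIdx a b c 2 = c := rfl

@[simp] theorem multiIdx_inj : multiIdx a b c = multiIdx a' b' c' ↔ a = a' ∧ b = b' ∧ c = c' := by
  simp [multiIdx, funext_iff, Fin.forall_fin_succ]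

theorem eq_multiIdx (m : Fin 3 →₀ ℕ) : m = multiIdx (m 0) (m 1) (m 2) := by
  ext i; fin_cases i <;> rfl

theorem single_zero_eq_multiIdx (n : ℕ) : Finsupp.single 0 n = multiIdx n 0 0 := by
  ext j; fin_cases j <;> simp

theorem single_one_eq_multiIdx (n : ℕ) : Finsupp.single 1 n = multiIdx 0 n 0 := by
  ext j; fin_cases j <;> simp

theorem single_two_eq_multiIdx (n : ℕ) : Finsupp.single 2 n = multiIdx 0 0 n := by
  ext j; fin_cases j <;> simp

end multiIdx

namespace MvPolynomial.IsHomogeneous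

variable {p : MvPolynomial (Fin 3) ℝ} {d : ℕ}

theorem apply_add_apply_add_apply (h : p.IsHomogeneous d) {m : Fin 3 →₀ ℕ}
    (hm : m ∈ p.support) : m 0 + m 1 + m 2 = d := by
  simpa [Finsupp.weight_apply, Finsupp.sum_fintype, Fin.sum_univ_three] using
    h (mem_support_iff.mp hm)

theorem injOn_apply_zero_apply_two (h : p.IsHomogeneous d) :
    Set.InjOn (fun m : Fin 3 →₀ ℕ => (m 0, m 2)) p.support := fun m hm m' hm' hmm' => by
  simp only [Prod.mk.injEq] at hmm'
  have := h.apply_add_apply_add_apply hm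
  have := h.apply_add_apply_add_apply hm'
  rw [eq_multiIdx m, eq_multiIdx m', multiIdx_inj]
  omega

theorem support_subset_two (h : p.IsHomogeneous 2) :
    p.support ⊆ {multiIdx 2 0 0, multiIdx 0 2 0, multiIdx 0 0 2, multiIdx 1 1 0, multiIdx 1 0 1,
      multiIdx 0 1 1} := fun m hm => by
  have hm := h.apply_add_apply_add_apply hm
  rw [eq_multiIdx m]
  generalize m 0 = a, m 1 = b, m 2 = c at hm ⊢
  obtain rfl : b = 2 - a - c := by omega
  have : a ≤ 2 := by omega
  have : c ≤ 2 - a := by omega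
  interval_cases a <;> interval_cases c <;> simp

theorem support_subset_three (h : p.IsHomogeneous 3) :
    p.support ⊆ {multiIdx 3 0 0, multiIdx 0 3 0, multiIdx 0 0 3, multiIdx 2 1 0, multiIdx 2 0 1,
      multiIdx 1 2 0, multiIdx 0 2 1, multiIdx 1 0 2, multiIdx 0 1 2, multiIdx 1 1 1} :=
    fun m hm => by
  have hm := h.apply_add_apply_add_apply hm
  rw [eq_multiIdx m]
  generalize m 0 = a, m 1 = b, m 2 = c at hm ⊢
  obtain rfl : b = 3 - a - c := by omega
  have : a ≤ 3 := by omega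
  have : c ≤ 3 - a := by omega
  interval_cases a <;> interval_cases c <;> simp

end MvPolynomial.IsHomogeneous

noncomputable def nonzeroInd (r : ℝ) : ℕ := if r = 0 then 0 else 1

@[simp] theorem nonzeroInd_zero : nonzeroInd 0 = 0 := if_pos rfl

theorem nonzeroInd_of_ne_zero {r : ℝ} (hr : r ≠ 0) : nonzeroInd r = 1 := if_neg hr

theorem nonzeroInd_eq_zero {r : ℝ} : nonzeroInd r = 0 ↔ r = 0 := by
  unfold nonzeroInd; split_ifs with hr <;> simp [hr]

theorem nonzeroInd_le_one (r : ℝ) : nonzeroInd r ≤ 1 := by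
  unfold nonzeroInd; split_ifs <;> simp

section SupportSubset

variable {p : MvPolynomial (Fin 3) ℝ} {T : Finset (Fin 3 →₀ ℕ)}

theorem eval_eq_sum_of_support_subset (hT : p.support ⊆ T) (x : Fin 3 → ℝ) :
    eval x p = ∑ m ∈ T, coeff m p * (x 0 ^ m 0 * x 1 ^ m 1 * x 2 ^ m 2) := by
  rw [eval_eq', sum_subset hT fun m _ hm => by rw [notMem_support_iff.mp hm, zero_mul]]
  simp only [Fin.prod_univ_three, mul_assoc]

theorem sum_support_eq_sum_of_support_subset (hT : p.support ⊆ T) (f : (Fin 3 →₀ ℕ) → ℕ) :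
    ∑ m ∈ p.support, f m = ∑ m ∈ T, nonzeroInd (coeff m p) * f m := by
  rw [← sum_subset hT fun m _ hm => by rw [notMem_support_iff.mp hm, nonzeroInd_zero, zero_mul]]
  exact sum_congr rfl fun m hm => by rw [nonzeroInd_of_ne_zero (mem_support_iff.mp hm), one_mul]

theorem eq_sum_of_support_subset (hT : p.support ⊆ T) :
    p = ∑ m ∈ T, C (coeff m p) * (X 0 ^ m 0 * X 1 ^ m 1 * X 2 ^ m 2) := by
  conv_lhs =>
    rw [p.as_sum, sum_subset hT fun m _ hm => by rw [notMem_support_iff.mp hm, monomial_zero]]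
  refine sum_congr rfl fun m _ => ?_
  rw [monomial_eq, Finsupp.prod_fintype _ _ fun _ => pow_zero _, Fin.prod_univ_three, mul_assoc]

end SupportSubset

namespace MvPolynomial.IsHomogeneous

variable {p : MvPolynomial (Fin 3) ℝ}

theorem eval_vec_eq_of_two (h : p.IsHomogeneous 2) (x y t : ℝ) :
    eval ![x, y, t] p = coeff (multiIdx 2 0 0) p * x ^ 2 + coeff (multiIdx 0 2 0) p * y ^ 2 +
      coeff (multiIdx 0 0 2) p * t ^ 2 + coeff (multiIdx 1 1 0) p * (x * y) +
      coeff (multiIdx 1 0 1) p * (x * t) + coeff (multiIdx 0 1 1) p * (y * t) := by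
  rw [eval_eq_sum_of_support_subset h.support_subset_two]
  simp [sum_insert, add_assoc]

theorem eq_of_two (h : p.IsHomogeneous 2) :
    p = C (coeff (multiIdx 2 0 0) p) * X 0 ^ 2 + C (coeff (multiIdx 0 2 0) p) * X 1 ^ 2 +
      C (coeff (multiIdx 0 0 2) p) * X 2 ^ 2 + C (coeff (multiIdx 1 1 0) p) * (X 0 * X 1) +
      C (coeff (multiIdx 1 0 1) p) * (X 0 * X 2) + C (coeff (multiIdx 0 1 1) p) * (X 1 * X 2) := by
  conv_lhs => rw [eq_sum_of_support_subset h.support_subset_two]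
  simp [sum_insert, add_assoc]

theorem sum_support_eq_of_two (h : p.IsHomogeneous 2) (f : (Fin 3 →₀ ℕ) → ℕ) :
    ∑ m ∈ p.support, f m =
      nonzeroInd (coeff (multiIdx 2 0 0) p) * f (multiIdx 2 0 0) +
      nonzeroInd (coeff (multiIdx 0 2 0) p) * f (multiIdx 0 2 0) +
      nonzeroInd (coeff (multiIdx 0 0 2) p) * f (multiIdx 0 0 2) +
      nonzeroInd (coeff (multiIdx 1 1 0) p) * f (multiIdx 1 1 0) +
      nonzeroInd (coeff (multiIdx 1 0 1) p) * f (multiIdx 1 0 1) +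
      nonzeroInd (coeff (multiIdx 0 1 1) p) * f (multiIdx 0 1 1) := by
  rw [sum_support_eq_sum_of_support_subset h.support_subset_two]
  simp [sum_insert, add_assoc]

theorem eval_vec_eq_of_three (h : p.IsHomogeneous 3) (x y t : ℝ) :
    eval ![x, y, t] p = coeff (multiIdx 3 0 0) p * x ^ 3 + coeff (multiIdx 0 3 0) p * y ^ 3 +
      coeff (multiIdx 0 0 3) p * t ^ 3 + coeff (multiIdx 2 1 0) p * (x ^ 2 * y) +
      coeff (multiIdx 2 0 1) p * (x ^ 2 * t) + coeff (multiIdx 1 2 0) p * (x * y ^ 2) +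
      coeff (multiIdx 0 2 1) p * (y ^ 2 * t) + coeff (multiIdx 1 0 2) p * (x * t ^ 2) +
      coeff (multiIdx 0 1 2) p * (y * t ^ 2) + coeff (multiIdx 1 1 1) p * (x * y * t) := by
  rw [eval_eq_sum_of_support_subset h.support_subset_three]
  simp [sum_insert, add_assoc]

theorem eq_of_three (h : p.IsHomogeneous 3) :
    p = C (coeff (multiIdx 3 0 0) p) * X 0 ^ 3 + C (coeff (multiIdx 0 3 0) p) * X 1 ^ 3 +
      C (coeff (multiIdx 0 0 3) p) * X 2 ^ 3 + C (coeff (multiIdx 2 1 0) p) * (X 0 ^ 2 * X 1) +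
      C (coeff (multiIdx 2 0 1) p) * (X 0 ^ 2 * X 2) +
      C (coeff (multiIdx 1 2 0) p) * (X 0 * X 1 ^ 2) +
      C (coeff (multiIdx 0 2 1) p) * (X 1 ^ 2 * X 2) +
      C (coeff (multiIdx 1 0 2) p) * (X 0 * X 2 ^ 2) +
      C (coeff (multiIdx 0 1 2) p) * (X 1 * X 2 ^ 2) +
      C (coeff (multiIdx 1 1 1) p) * (X 0 * X 1 * X 2) := by
  conv_lhs => rw [eq_sum_of_support_subset h.support_subset_three]
  simp [sum_insert, add_assoc]

theorem sum_support_eq_of_three (h : p.IsHomogeneous 3) (f : (Fin 3 →₀ ℕ) → ℕ) :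
    ∑ m ∈ p.support, f m =
      nonzeroInd (coeff (multiIdx 3 0 0) p) * f (multiIdx 3 0 0) +
      nonzeroInd (coeff (multiIdx 0 3 0) p) * f (multiIdx 0 3 0) +
      nonzeroInd (coeff (multiIdx 0 0 3) p) * f (multiIdx 0 0 3) +
      nonzeroInd (coeff (multiIdx 2 1 0) p) * f (multiIdx 2 1 0) +
      nonzeroInd (coeff (multiIdx 2 0 1) p) * f (multiIdx 2 0 1) +
      nonzeroInd (coeff (multiIdx 1 2 0) p) * f (multiIdx 1 2 0) +
      nonzeroInd (coeff (multiIdx 0 2 1) p) * f (multiIdx 0 2 1) +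
      nonzeroInd (coeff (multiIdx 1 0 2) p) * f (multiIdx 1 0 2) +
      nonzeroInd (coeff (multiIdx 0 1 2) p) * f (multiIdx 0 1 2) +
      nonzeroInd (coeff (multiIdx 1 1 1) p) * f (multiIdx 1 1 1) := by
  rw [sum_support_eq_sum_of_support_subset h.support_subset_three]
  simp [sum_insert, add_assoc]

end MvPolynomial.IsHomogeneous

structure IsPlaneQuadrinomial (p : MvPolynomial (Fin 3) ℝ) (d : ℕ) : Prop where
  isHomogeneous : p.IsHomogeneous d
  card_support : #p.support = 4
  exists_mem_support_apply_eq_zero (i : Fin 3) : ∃ m ∈ p.support, m i = 0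
  eval_eq_zero (x : Fin 3 → ℝ) : ∑ i, x i = 0 → eval x p = 0

noncomputable def cubicForm : MvPolynomial (Fin 3) ℝ :=
  X 0 ^ 3 + X 1 ^ 3 + X 2 ^ 3 - C 3 * X 0 * X 1 * X 2

noncomputable def squareForm : MvPolynomial (Fin 3) ℝ :=
  X 0 ^ 2 + X 1 ^ 2 + C 2 * X 0 * X 1 - X 2 ^ 2

noncomputable def mixedForm : MvPolynomial (Fin 3) ℝ :=
  X 0 ^ 2 + X 0 * X 1 - X 1 * X 2 - X 2 ^ 2

def IsExceptional (p : MvPolynomial (Fin 3) ℝ) : Prop :=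
  ∃ (σ : Equiv.Perm (Fin 3)) (c : ℝ), c ≠ 0 ∧
    (rename σ p = C c * cubicForm ∨ rename σ p = C c * squareForm ∨ rename σ p = C c * mixedForm)

theorem cases_of_nonzeroInd_sum_eq_four {a b c : ℝ}
    (h : nonzeroInd a + nonzeroInd b + nonzeroInd c + nonzeroInd (a + b) + nonzeroInd (a + c) +
      nonzeroInd (b + c) = 4) :
    (a = 0 ∧ b ≠ 0 ∧ c = -b) ∨ (b = 0 ∧ a ≠ 0 ∧ c = -a) ∨ (c = 0 ∧ a ≠ 0 ∧ b = -a) ∨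
      (a ≠ 0 ∧ b = a ∧ c = -a) ∨ (a ≠ 0 ∧ c = a ∧ b = -a) ∨ (b ≠ 0 ∧ c = b ∧ a = -b) := by
  have := nonzeroInd_le_one (a + b)
  have := nonzeroInd_le_one (a + c)
  have := nonzeroInd_le_one (b + c)
  rcases eq_or_ne a 0 with rfl | ha
  · rcases eq_or_ne b 0 with rfl | hb
    · simp only [nonzeroInd_zero, zero_add] at h
      have := nonzeroInd_le_one c
      omega
    rcases eq_or_ne c 0 with rfl | hc
    · simp only [nonzeroInd_zero, zero_add, add_zero, nonzeroInd_of_ne_zero hb] at h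
      omega
    simp only [nonzeroInd_zero, zero_add, nonzeroInd_of_ne_zero hb, nonzeroInd_of_ne_zero hc] at h
    have hbc := nonzeroInd_eq_zero.mp (by omega : nonzeroInd (b + c) = 0)
    exact Or.inl ⟨rfl, hb, by linarith⟩
  rcases eq_or_ne b 0 with rfl | hb
  · rcases eq_or_ne c 0 with rfl | hc
    · simp only [nonzeroInd_zero, add_zero, nonzeroInd_of_ne_zero ha] at h
      omega
    simp only [nonzeroInd_zero, zero_add, add_zero, nonzeroInd_of_ne_zero ha,
      nonzeroInd_of_ne_zero hc] at h
    have hac := nonzeroInd_eq_zero.mp (by omega : nonzeroInd (a + c) = 0)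
    exact Or.inr <| Or.inl ⟨rfl, ha, by linarith⟩
  rcases eq_or_ne c 0 with rfl | hc
  · simp only [nonzeroInd_zero, add_zero, nonzeroInd_of_ne_zero ha, nonzeroInd_of_ne_zero hb] at h
    have hab := nonzeroInd_eq_zero.mp (by omega : nonzeroInd (a + b) = 0)
    exact Or.inr <| Or.inr <| Or.inl ⟨rfl, ha, by linarith⟩
  simp only [nonzeroInd_of_ne_zero ha, nonzeroInd_of_ne_zero hb, nonzeroInd_of_ne_zero hc] at h
  rcases eq_or_ne (a + b) 0 with hab | hab
  · rcases eq_or_ne (a + c) 0 with hac | hac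
    · exact Or.inr <| Or.inr <| Or.inr <| Or.inr <| Or.inr ⟨hb, by linarith, by linarith⟩
    rw [nonzeroInd_of_ne_zero hac] at h
    have hbc := nonzeroInd_eq_zero.mp (by omega : nonzeroInd (b + c) = 0)
    exact Or.inr <| Or.inr <| Or.inr <| Or.inr <| Or.inl ⟨ha, by linarith, by linarith⟩
  rw [nonzeroInd_of_ne_zero hab] at h
  have hac := nonzeroInd_eq_zero.mp (by omega : nonzeroInd (a + c) = 0)
  have hbc := nonzeroInd_eq_zero.mp (by omega : nonzeroInd (b + c) = 0)
  exact Or.inr <| Or.inr <| Or.inr <| Or.inl ⟨ha, by linarith, by linarith⟩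

namespace IsPlaneQuadrinomial

variable {p : MvPolynomial (Fin 3) ℝ} {d : ℕ}

protected theorem rename (h : IsPlaneQuadrinomial p d) (σ : Equiv.Perm (Fin 3)) :
    IsPlaneQuadrinomial (rename σ p) d where
  isHomogeneous := h.isHomogeneous.rename_isHomogeneous
  card_support := by
    rw [card_eq_sum_ones, sum_support_rename_perm, ← card_eq_sum_ones, h.card_support]
  exists_mem_support_apply_eq_zero i := by
    classical
    obtain ⟨m, hm, hmi⟩ := h.exists_mem_support_apply_eq_zero (σ.symm i)
    refine ⟨m.mapDomain σ, ?_, by rwa [Finsupp.mapDomain_equiv_apply]⟩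
    rw [support_rename_of_injective σ.injective]
    exact mem_image_of_mem _ hm
  eval_eq_zero x hx := by
    rw [eval_rename]
    exact h.eval_eq_zero _ (by rwa [Function.comp_def, Equiv.sum_comp σ x])

theorem two_le_card_covers (h : IsPlaneQuadrinomial p d) {n : ℕ} (hn : n ≤ d) :
    2 ≤ #{m ∈ p.support | m 0 ≤ n ∧ n ≤ m 0 + m 2} := by
  refine Polynomial.two_le_card_covers_of_sum_eq_zero (μ := fun m => coeff m p * (-1) ^ m 2)
    (fun m hm => mul_ne_zero (mem_support_iff.mp hm) (pow_ne_zero _ (by norm_num)))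
    h.isHomogeneous.injOn_apply_zero_apply_two
    (sum_support_C_mul_X_pow_mul_X_add_one_pow_eq_zero h.eval_eq_zero)
    (by rw [h.card_support]; norm_num) ?_ ?_
  · obtain ⟨m, hm, hm0⟩ := h.exists_mem_support_apply_eq_zero 0
    exact ⟨m, hm, by omega⟩
  · obtain ⟨m, hm, hm1⟩ := h.exists_mem_support_apply_eq_zero 1
    exact ⟨m, hm, by have := h.isHomogeneous.apply_add_apply_add_apply hm; omega⟩

theorem two_le_card_filter_apply_zero_eq_zero (h : IsPlaneQuadrinomial p d) :
    2 ≤ #{m ∈ p.support | m 0 = 0} := by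
  simpa using h.two_le_card_covers (Nat.zero_le d)

theorem two_le_card_filter_apply_one_eq_zero (h : IsPlaneQuadrinomial p d) :
    2 ≤ #{m ∈ p.support | m 1 = 0} := by
  convert h.two_le_card_covers le_rfl using 3 with m hm
  have := h.isHomogeneous.apply_add_apply_add_apply hm
  omega

theorem two_mul_add_two_le_sum_apply_two (h : IsPlaneQuadrinomial p d) :
    2 * d + 2 ≤ ∑ m ∈ p.support, (m 2 + 1) := by
  have hcount := sum_range_card_filter_covers (S := p.support) (a := fun m => m 0)
    (c := fun m => m 2) d fun m hm => by
      have := h.isHomogeneous.apply_add_apply_add_apply hm; omega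
  rw [← hcount]
  calc 2 * d + 2 = ∑ _n ∈ range (d + 1), 2 := by rw [sum_const, card_range, smul_eq_mul]; ring
    _ ≤ _ := sum_le_sum fun n hn => h.two_le_card_covers (by rw [mem_range] at hn; omega)

theorem two_mul_add_two_le_sum_apply (h : IsPlaneQuadrinomial p d) (i : Fin 3) :
    2 * d + 2 ≤ ∑ m ∈ p.support, (m i + 1) := by
  simpa [sum_support_rename_perm] using
    (h.rename (Equiv.swap i 2)).two_mul_add_two_le_sum_apply_two

theorem sum_sum_apply_add_one (h : IsPlaneQuadrinomial p d) :
    ∑ i, ∑ m ∈ p.support, (m i + 1) = 4 * (d + 3) := by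
  rw [sum_comm, ← smul_eq_mul, ← h.card_support, ← sum_const]
  refine sum_congr rfl fun m hm => ?_
  simp only [sum_add_distrib, Fin.sum_univ_three, h.isHomogeneous.apply_add_apply_add_apply hm]

theorem degree_le_three (h : IsPlaneQuadrinomial p d) : d ≤ 3 := by
  have htot := h.sum_sum_apply_add_one
  have h0 := h.two_mul_add_two_le_sum_apply 0
  have h1 := h.two_mul_add_two_le_sum_apply 1
  have h2 := h.two_mul_add_two_le_sum_apply 2
  rw [Fin.sum_univ_three] at htot
  omega

theorem sum_apply_eq_four (h : IsPlaneQuadrinomial p 3) (i : Fin 3) :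
    ∑ m ∈ p.support, m i = 4 := by
  have htot := h.sum_sum_apply_add_one
  have h0 := h.two_mul_add_two_le_sum_apply 0
  have h1 := h.two_mul_add_two_le_sum_apply 1
  have h2 := h.two_mul_add_two_le_sum_apply 2
  simp only [Fin.sum_univ_three, sum_add_distrib, sum_const, h.card_support, card_univ,
    Fintype.card_fin, smul_eq_mul, mul_one] at htot h0 h1 h2
  fin_cases i <;> simp only [Fin.zero_eta, Fin.mk_one, Fin.reduceFinMk] <;> omega

theorem two_le_degree (h : IsPlaneQuadrinomial p d) : 2 ≤ d := by
  by_contra! hd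
  have hcard := card_le_card_of_injOn (fun m : Fin 3 →₀ ℕ => (m 0, m 2))
    (t := (range 2 ×ˢ range 2).filter (fun x => x.1 + x.2 ≤ 1))
    (fun m hm => by
      have := h.isHomogeneous.apply_add_apply_add_apply hm
      simp only [coe_filter, mem_product, mem_range, Set.mem_ofPred_eq]
      omega)
    h.isHomogeneous.injOn_apply_zero_apply_two
  rw [h.card_support] at hcard
  exact absurd hcard (by decide)

theorem eval_vec_eq_zero (h : IsPlaneQuadrinomial p d) {x y t : ℝ} (hs : x + y + t = 0) :
    eval ![x, y, t] p = 0 :=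
  h.eval_eq_zero _ (by simpa [Fin.sum_univ_three] using hs)

theorem isExceptional_of_two (h : IsPlaneQuadrinomial p 2) : IsExceptional p := by
  have hp := h.isHomogeneous.eq_of_two
  have hrel := fun x y t (hs : x + y + t = 0) =>
    (h.isHomogeneous.eval_vec_eq_of_two x y t).symm.trans (h.eval_vec_eq_zero hs)
  have hcard := h.card_support
  rw [card_eq_sum_ones, h.isHomogeneous.sum_support_eq_of_two] at hcard
  set A := coeff (multiIdx 2 0 0) p
  set B := coeff (multiIdx 0 2 0) p
  set G := coeff (multiIdx 0 0 2) p
  have hD : coeff (multiIdx 1 1 0) p = A + B := by linear_combination -hrel 1 (-1) 0 (by norm_num)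
  have hE : coeff (multiIdx 1 0 1) p = A + G := by linear_combination -hrel 1 0 (-1) (by norm_num)
  have hF : coeff (multiIdx 0 1 1) p = B + G := by linear_combination -hrel 0 1 (-1) (by norm_num)
  rw [hD, hE, hF] at hcard hp
  rcases cases_of_nonzeroInd_sum_eq_four (a := A) (b := B) (c := G) (by omega) with
    ⟨hA, hB, hG⟩ | ⟨hB, hA, hG⟩ | ⟨hG, hA, hB⟩ | ⟨hA, hB, hG⟩ | ⟨hA, hG, hB⟩ | ⟨hB, hG, hA⟩
  · refine ⟨Equiv.swap 0 1, B, hB, Or.inr (Or.inr ?_)⟩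
    rw [hp, hA, hG]
    simp only [mixedForm, map_add, map_mul, map_pow, map_neg, map_zero, rename_C, rename_X,
      Equiv.swap_apply_def, Fin.reduceEq, ↓reduceIte]
    ring
  · refine ⟨Equiv.refl _, A, hA, Or.inr (Or.inr ?_)⟩
    rw [hp, hB, hG]
    simp only [mixedForm, map_add, map_mul, map_pow, map_neg, map_zero, Equiv.coe_refl, rename_id,
      AlgHom.id_apply]
    ring
  · refine ⟨Equiv.swap 1 2, A, hA, Or.inr (Or.inr ?_)⟩
    rw [hp, hB, hG]
    simp only [mixedForm, map_add, map_mul, map_pow, map_neg, map_zero, rename_C, rename_X,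
      Equiv.swap_apply_def, Fin.reduceEq, ↓reduceIte]
    ring
  · refine ⟨Equiv.refl _, A, hA, Or.inr (Or.inl ?_)⟩
    rw [hp, hB, hG]
    simp only [squareForm, map_add, map_mul, map_pow, map_neg, map_ofNat, Equiv.coe_refl, rename_id,
      AlgHom.id_apply]
    ring
  · refine ⟨Equiv.swap 1 2, A, hA, Or.inr (Or.inl ?_)⟩
    rw [hp, hB, hG]
    simp only [squareForm, map_add, map_mul, map_pow, map_neg, map_ofNat, rename_C, rename_X,
      Equiv.swap_apply_def, Fin.reduceEq, ↓reduceIte]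
    ring
  · refine ⟨Equiv.swap 0 2, B, hB, Or.inr (Or.inl ?_)⟩
    rw [hp, hA, hG]
    simp only [squareForm, map_add, map_mul, map_pow, map_neg, map_ofNat, rename_C, rename_X,
      Equiv.swap_apply_def, Fin.reduceEq, ↓reduceIte]
    ring

theorem coeff_multiIdx_zero_zero_three_ne_zero (h : IsPlaneQuadrinomial p 3) :
    coeff (multiIdx 0 0 3) p ≠ 0 := by
  have hrel := fun x y t (hs : x + y + t = 0) =>
    (h.isHomogeneous.eval_vec_eq_of_three x y t).symm.trans (h.eval_vec_eq_zero hs)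
  have hcard := h.card_support
  have hZ0 := h.two_le_card_filter_apply_zero_eq_zero
  have hZ1 := h.two_le_card_filter_apply_one_eq_zero
  have hcol := h.sum_apply_eq_four 2
  rw [card_eq_sum_ones, h.isHomogeneous.sum_support_eq_of_three] at hcard
  rw [card_filter, h.isHomogeneous.sum_support_eq_of_three] at hZ0 hZ1
  rw [h.isHomogeneous.sum_support_eq_of_three] at hcol
  simp only [multiIdx_apply_zero, multiIdx_apply_one, multiIdx_apply_two, Nat.reduceEqDiff,
    ↓reduceIte] at hZ0 hZ1 hcol
  set c300 := coeff (multiIdx 3 0 0) p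
  set c030 := coeff (multiIdx 0 3 0) p
  set c003 := coeff (multiIdx 0 0 3) p
  set c210 := coeff (multiIdx 2 1 0) p
  set c201 := coeff (multiIdx 2 0 1) p
  set c120 := coeff (multiIdx 1 2 0) p
  set c021 := coeff (multiIdx 0 2 1) p
  set c102 := coeff (multiIdx 1 0 2) p
  set c012 := coeff (multiIdx 0 1 2) p
  set c111 := coeff (multiIdx 1 1 1) p
  intro h003
  rw [h003, nonzeroInd_zero] at hZ0 hZ1 hcard hcol
  -- Two monomials free of `x` and two free of `y` already fill the support.
  have h210 : c210 = 0 := nonzeroInd_eq_zero.mp (by omega)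
  have h120 : c120 = 0 := nonzeroInd_eq_zero.mp (by omega)
  have h111 : c111 = 0 := nonzeroInd_eq_zero.mp (by omega)
  rw [h111, nonzeroInd_zero] at hcol
  have := nonzeroInd_le_one c201
  have := nonzeroInd_le_one c102
  have := nonzeroInd_le_one c021
  have := nonzeroInd_le_one c012
  have h030 : c030 = c300 := by linarith [hrel 1 (-1) 0 (by norm_num)]
  rcases eq_or_ne c300 0 with h300 | h300
  · rw [h300, h030, h300, nonzeroInd_zero] at hZ0 hZ1
    omega
  · rw [h030, nonzeroInd_of_ne_zero h300] at hcard
    have h201 : c201 = 0 := nonzeroInd_eq_zero.mp (by omega)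
    have h021 : c021 = 0 := nonzeroInd_eq_zero.mp (by omega)
    have e1 := hrel 1 0 (-1) (by norm_num)
    have e2 := hrel 0 1 (-1) (by norm_num)
    have e3 := hrel 1 1 (-2) (by norm_num)
    exact h300 (by linarith)

theorem coeff_single_three_ne_zero (h : IsPlaneQuadrinomial p 3) (i : Fin 3) :
    coeff (Finsupp.single i 3) p ≠ 0 := by
  have := (h.rename (Equiv.swap i 2)).coeff_multiIdx_zero_zero_three_ne_zero
  rwa [← single_two_eq_multiIdx, show Finsupp.single 2 3 = (Finsupp.single i 3).mapDomain
      (Equiv.swap i 2) by rw [Finsupp.mapDomain_single, Equiv.swap_apply_left],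
    coeff_rename_mapDomain _ (Equiv.injective _)] at this

theorem isExceptional_of_three (h : IsPlaneQuadrinomial p 3) : IsExceptional p := by
  have hp := h.isHomogeneous.eq_of_three
  have hrel := fun x y t (hs : x + y + t = 0) =>
    (h.isHomogeneous.eval_vec_eq_of_three x y t).symm.trans (h.eval_vec_eq_zero hs)
  have hcol0 := h.sum_apply_eq_four 0
  have hcol1 := h.sum_apply_eq_four 1
  have hcol2 := h.sum_apply_eq_four 2
  rw [h.isHomogeneous.sum_support_eq_of_three] at hcol0 hcol1 hcol2
  simp only [multiIdx_apply_zero, multiIdx_apply_one, multiIdx_apply_two] at hcol0 hcol1 hcol2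
  have h300 := h.coeff_single_three_ne_zero 0
  have h030 := h.coeff_single_three_ne_zero 1
  have h003 := h.coeff_single_three_ne_zero 2
  rw [single_zero_eq_multiIdx] at h300
  rw [single_one_eq_multiIdx] at h030
  rw [single_two_eq_multiIdx] at h003
  rw [nonzeroInd_of_ne_zero h300, nonzeroInd_of_ne_zero h030, nonzeroInd_of_ne_zero h003]
    at hcol0 hcol1 hcol2
  -- Each cube already accounts for `3` of the exponent sum `4` of its variable.
  have h210 : coeff (multiIdx 2 1 0) p = 0 := nonzeroInd_eq_zero.mp (by omega)
  have h201 : coeff (multiIdx 2 0 1) p = 0 := nonzeroInd_eq_zero.mp (by omega)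
  have h120 : coeff (multiIdx 1 2 0) p = 0 := nonzeroInd_eq_zero.mp (by omega)
  have h021 : coeff (multiIdx 0 2 1) p = 0 := nonzeroInd_eq_zero.mp (by omega)
  have h102 : coeff (multiIdx 1 0 2) p = 0 := nonzeroInd_eq_zero.mp (by omega)
  have h012 : coeff (multiIdx 0 1 2) p = 0 := nonzeroInd_eq_zero.mp (by omega)
  set c300 := coeff (multiIdx 3 0 0) p
  have e1 := hrel 1 (-1) 0 (by norm_num)
  have e2 := hrel 1 0 (-1) (by norm_num)
  have e3 := hrel 1 1 (-2) (by norm_num)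
  have hc030 : coeff (multiIdx 0 3 0) p = c300 := by linarith
  have hc003 : coeff (multiIdx 0 0 3) p = c300 := by linarith
  have hc111 : coeff (multiIdx 1 1 1) p = -3 * c300 := by linarith
  refine ⟨Equiv.refl _, c300, h300, Or.inl ?_⟩
  rw [hp, hc030, hc003, hc111, h210, h201, h120, h021, h102, h012]
  simp only [cubicForm, map_add, map_mul, map_pow, map_neg, map_zero, map_ofNat, Equiv.coe_refl,
    rename_id, AlgHom.id_apply]
  ring

end IsPlaneQuadrinomial

theorem stmt_5 (p : MvPolynomial (Fin 3) ℝ)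
    (hhom : ∃ d, p.IsHomogeneous d)
    (hcard : p.support.card = 4)
    (hnocommon : ¬ ∃ m : Fin 3 →₀ ℕ, m ≠ 0 ∧ ∀ s ∈ p.support, m ≤ s)
    (hvan : ∀ x y t : ℝ, x + y + t = 0 → eval ![x, y, t] p = 0) :
    ∃ (σ : Equiv.Perm (Fin 3)) (c : ℝ), c ≠ 0 ∧
      (rename σ p = C c * (X 0 ^ 3 + X 1 ^ 3 + X 2 ^ 3 - C 3 * X 0 * X 1 * X 2) ∨
       rename σ p = C c * (X 0 ^ 2 + X 1 ^ 2 + C 2 * X 0 * X 1 - X 2 ^ 2) ∨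
       rename σ p = C c * (X 0 ^ 2 + X 0 * X 1 - X 1 * X 2 - X 2 ^ 2)) := by
  obtain ⟨d, hd⟩ := hhom
  have h : IsPlaneQuadrinomial p d :=
    { isHomogeneous := hd
      card_support := hcard
      exists_mem_support_apply_eq_zero := fun i => by
        by_contra! hi
        exact hnocommon ⟨Finsupp.single i 1, by simp, fun s hs =>
          Finsupp.single_le_iff.mpr (Nat.one_le_iff_ne_zero.mpr (hi s hs))⟩
      eval_eq_zero := fun x hx => by
        rw [show x = ![x 0, x 1, x 2] by ext i; fin_cases i <;> rfl]
        exact hvan _ _ _ (by simpa [Fin.sum_univ_three] using hx) }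
  obtain rfl | rfl : d = 2 ∨ d = 3 := by
    have := h.two_le_degree
    have := h.degree_le_three
    omega
  · exact h.isExceptional_of_two
  · exact h.isExceptional_of_three
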